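/- White's stratification theorem, dimension part: under the Structural Hypotheses (i') and (ii') of White's setting, for every ℓ ∈ {1, …, n} the Hausdorff dimension of the stratum Σ_ℓ is at most ℓ. -/

import Mathlib

/-!
At a point `x` of `Σ_ℓ`, blowing `f` up along a sequence of scales yields, by (ii'), a conical
`g ∈ 𝒢(x)` with `g 0 = f x`; any limit of rescaled points at which `f` nearly attains `f x`
is a maximum point of `g`, hence lies in the spine of `g`, whose span has dimension `≤ ℓ`.
Arguing by contradiction along a sequence of scales, for every `ε > 0` there is `η > 0` such
that at every scale `ρ ≤ η` the points `y ∈ B_ρ(x)` with `f y ≥ f x - η` lie within `ε ρ` of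
an affine plane `x + W` with `dim W ≤ ℓ`.

Sorting the points of `Σ_ℓ` by `η` and by the value of `f` splits `Σ_ℓ` into countably many
bounded pieces that are `ε`-flat in this sense at each of their points and at every scale below
a fixed `ρ₀`. By a volume count, a piece meets each ball of radius `ρ` in a set covered by
`(4/ε + 1)^ℓ` balls of radius `6 ε ρ` centred in the piece, so iterating covers it by
`M ((4/ε + 1)^ℓ)^m` balls of radius `(6ε)^m ρ₀`. Its `d`-dimensional Hausdorff measure therefore
vanishes once `(4/ε + 1)^ℓ (6ε)^d < 1`, which holds for small `ε` as soon as `d > ℓ`.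
-/

open Metric MeasureTheory Set Filter

noncomputable section

/-- A function `g : ℝⁿ → [0,∞)` is conical if it is upper semicontinuous and, whenever
`g(z) = g(0)`, it is positively 0-homogeneous with respect to `z`. -/
def IsConical {n : ℕ} (g : EuclideanSpace ℝ (Fin n) → ℝ) : Prop :=
  UpperSemicontinuous g ∧ (∀ x, 0 ≤ g x) ∧
    ∀ z, g z = g 0 → ∀ (x : EuclideanSpace ℝ (Fin n)) (lam : ℝ), 0 < lam →
      g (z + lam • x) = g (z + x)

/-- A class `𝒢` of conical functions is compact if every sequence in `𝒢` admits a
subsequence `(g_{i_j})` and a limit `g ∈ 𝒢` with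
`limsup_j g_{i_j}(y_j) ≤ g(y)` whenever `y_j → y`. -/
def IsCompactClass {n : ℕ} (G : Set (EuclideanSpace ℝ (Fin n) → ℝ)) : Prop :=
  ∀ g : ℕ → (EuclideanSpace ℝ (Fin n) → ℝ), (∀ i, g i ∈ G) →
    ∃ φ : ℕ → ℕ, StrictMono φ ∧ ∃ g' ∈ G,
      ∀ (y : EuclideanSpace ℝ (Fin n)) (ys : ℕ → EuclideanSpace ℝ (Fin n)),
        Tendsto ys atTop (nhds y) →
        limsup (fun j => g (φ j) (ys j)) atTop ≤ g' y

/-- The spine `S_g := {z : g(z) = g(0)}` of a conical function. -/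
def spine {n : ℕ} (g : EuclideanSpace ℝ (Fin n) → ℝ) : Set (EuclideanSpace ℝ (Fin n)) :=
  {z | g z = g 0}

/-- The dimension of the spine of `g` (for a conical `g` the spine is a linear subspace,
so we take the dimension of its span). -/
def spineDim {n : ℕ} (g : EuclideanSpace ℝ (Fin n) → ℝ) : ℕ :=
  Module.finrank ℝ (Submodule.span ℝ (spine g))

/-- The stratum `Σ_ℓ := {x ∈ Ω : f(x) > 0 and d(x) ≤ ℓ}`, where
`d(x) = sup {dim S_g : g ∈ 𝒢(x)}`. -/
def whiteStratum {n : ℕ} (Ω : Set (EuclideanSpace ℝ (Fin n)))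
    (f : EuclideanSpace ℝ (Fin n) → ℝ)
    (G : EuclideanSpace ℝ (Fin n) → Set (EuclideanSpace ℝ (Fin n) → ℝ)) (ℓ : ℕ) :
    Set (EuclideanSpace ℝ (Fin n)) :=
  {x ∈ Ω | 0 < f x ∧ ∀ g ∈ G x, spineDim g ≤ ℓ}

/-- White's Structural Hypothesis (ii'): for every `x ∈ Ω` and every sequence `r_i ↓ 0`
there are a subsequence `r_{i_j} ↓ 0` and `g ∈ 𝒢(x)` such that
`limsup_j f(x + r_{i_j} y_j) ≤ g(y)` for all `y, y_j ∈ B_1` with `y_j → y`. -/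
def WhiteHypII {n : ℕ} (Ω : Set (EuclideanSpace ℝ (Fin n)))
    (f : EuclideanSpace ℝ (Fin n) → ℝ)
    (G : EuclideanSpace ℝ (Fin n) → Set (EuclideanSpace ℝ (Fin n) → ℝ)) : Prop :=
  ∀ x ∈ Ω, ∀ r : ℕ → ℝ, (∀ i, 0 < r i) → StrictAnti r → Tendsto r atTop (nhds 0) →
    ∃ φ : ℕ → ℕ, StrictMono φ ∧ ∃ g ∈ G x,
      ∀ y ∈ ball (0 : EuclideanSpace ℝ (Fin n)) 1,
      ∀ ys : ℕ → EuclideanSpace ℝ (Fin n),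
        (∀ j, ys j ∈ ball (0 : EuclideanSpace ℝ (Fin n)) 1) →
        Tendsto ys atTop (nhds y) →
        limsup (fun j => f (x + r (φ j) • ys j)) atTop ≤ g y

open Topology Module
open scoped ENNReal NNReal

section Covering

variable {V : Type*} [NormedAddCommGroup V] [NormedSpace ℝ V] [FiniteDimensional ℝ V]

theorem card_le_of_isSeparated_of_subset_closedBall {C : Finset V} {R : ℝ} (hR : 0 ≤ R)
    {δ : ℝ≥0} (hδ : 0 < δ) (hC : (C : Set V) ⊆ closedBall 0 R)
    (hsep : IsSeparated (δ : ℝ≥0∞) (C : Set V)) :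
    (C.card : ℝ) ≤ (2 * R / δ + 1) ^ finrank ℝ V := by
  borelize V
  set μ : Measure V := Measure.addHaar
  set m := finrank ℝ V
  have hdisj : (C : Set V).PairwiseDisjoint fun c => ball c (δ / 2) := by
    intro a ha b hb hab
    refine ball_disjoint_ball ?_
    have : (δ : ℝ≥0∞) < edist a b := hsep ha hb hab
    rw [edist_nndist, ENNReal.coe_lt_coe, ← NNReal.coe_lt_coe, coe_nndist] at this
    linarith
  have hsub : ⋃ c ∈ C, ball c (δ / 2) ⊆ ball 0 (R + δ / 2) := by
    refine iUnion₂_subset fun c hc => ball_subset_ball' ?_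
    have := mem_closedBall.1 (hC hc)
    linarith
  have hvol : (C.card : ℝ≥0∞) * μ (ball 0 (δ / 2)) ≤ μ (ball 0 (R + δ / 2)) :=
    calc (C.card : ℝ≥0∞) * μ (ball 0 (δ / 2)) = ∑ c ∈ C, μ (ball c (δ / 2)) := by
          simp [Measure.addHaar_ball_center]
      _ = μ (⋃ c ∈ C, ball c (δ / 2)) :=
          (measure_biUnion_finset hdisj fun _ _ => measurableSet_ball).symm
      _ ≤ μ (ball 0 (R + δ / 2)) := measure_mono hsub
  rw [Measure.addHaar_ball_of_pos μ _ (r := δ / 2) (by positivity),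
    Measure.addHaar_ball_of_pos μ _ (r := R + δ / 2) (by positivity), ← mul_assoc,
    ENNReal.mul_le_mul_iff_left (measure_ball_pos μ 0 one_pos).ne' measure_ball_lt_top.ne,
    ← ENNReal.ofReal_natCast, ← ENNReal.ofReal_mul (by positivity),
    ENNReal.ofReal_le_ofReal_iff (by positivity)] at hvol
  calc (C.card : ℝ) = C.card * (δ / 2 : ℝ) ^ m / (δ / 2 : ℝ) ^ m := by field_simp
    _ ≤ (R + δ / 2) ^ m / (δ / 2 : ℝ) ^ m := by gcongr
    _ = (2 * R / δ + 1) ^ m := by rw [← div_pow]; congr 1; field_simp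

theorem exists_finset_cover_closedBall {R δ : ℝ} (hR : 0 ≤ R) (hδ : 0 < δ) :
    ∃ t : Finset V, (t.card : ℝ) ≤ (2 * R / δ + 1) ^ finrank ℝ V ∧
      closedBall 0 R ⊆ ⋃ c ∈ t, closedBall c δ := by
  lift δ to ℝ≥0 using hδ.le
  set A := closedBall (0 : V) R
  have hpack : packingNumber δ A ≠ ⊤ := by
    refine ne_top_of_le_ne_top (ENat.natCast_ne_top ⌊(2 * R / δ + 1) ^ finrank ℝ V⌋₊) ?_
    refine iSup₂_le fun C hCA => iSup_le fun hsep => ?_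
    by_contra! hlt
    obtain ⟨D, hDC, hD⟩ := exists_subset_encard_eq (Order.add_one_le_of_lt hlt)
    have hDfin : D.Finite := finite_of_encard_eq_coe hD
    have hcard := card_le_of_isSeparated_of_subset_closedBall hR hδ
      (hDfin.coe_toFinset.symm ▸ hDC.trans hCA) (hDfin.coe_toFinset.symm ▸ hsep.subset hDC)
    rw [hDfin.encard_eq_coe_toFinset_card] at hD
    rw [show hDfin.toFinset.card = _ + 1 by exact_mod_cast hD, Nat.cast_succ] at hcard
    linarith [Nat.lt_floor_add_one ((2 * R / δ + 1) ^ finrank ℝ V)]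
  have hfin : (maximalSeparatedSet δ A).Finite :=
    encard_ne_top_iff.1 (encard_maximalSeparatedSet hpack ▸ hpack)
  refine ⟨hfin.toFinset, card_le_of_isSeparated_of_subset_closedBall hR hδ ?_ ?_, ?_⟩
  · simpa using maximalSeparatedSet_subset
  · simpa using isSeparated_maximalSeparatedSet
  · simpa using (isCover_maximalSeparatedSet hpack).subset_iUnion_closedBall

end Covering

section MetricCovers

variable {X : Type*} [PseudoMetricSpace X]

theorem exists_finset_subset_cover_two_mul {s : Set X} {t : Finset X} {r : ℝ}
    (h : s ⊆ ⋃ c ∈ t, closedBall c r) :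
    ∃ t' : Finset X, ↑t' ⊆ s ∧ t'.card ≤ t.card ∧ s ⊆ ⋃ c ∈ t', closedBall c (2 * r) := by
  classical
  rcases s.eq_empty_or_nonempty with rfl | ⟨x₀, hx₀⟩
  · exact ⟨∅, by simp⟩
  let p : X → X := fun c => if h : (s ∩ closedBall c r).Nonempty then h.some else x₀
  have hp : ∀ c, p c ∈ s := fun c => by
    by_cases hc : (s ∩ closedBall c r).Nonempty
    · simpa [p, hc] using hc.some_mem.1
    · simpa [p, hc] using hx₀
  refine ⟨t.image p, by simpa [Set.subset_def] using fun c _ => hp c, Finset.card_image_le,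
    fun y hy => ?_⟩
  obtain ⟨c, hc, hyc⟩ := mem_iUnion₂.1 (h hy)
  have hne : (s ∩ closedBall c r).Nonempty := ⟨y, hy, hyc⟩
  have hpc : dist (p c) c ≤ r := by simpa [p, hne] using hne.some_mem.2
  refine mem_iUnion₂.2 ⟨p c, Finset.mem_image_of_mem p hc, ?_⟩
  rw [mem_closedBall] at hyc ⊢
  linarith [dist_triangle_right y (p c) c]

theorem exists_finset_cover_refine {A : Set X} {N r r' : ℝ}
    (hstep : ∀ x ∈ A, ∃ t : Finset X, ↑t ⊆ A ∧ (t.card : ℝ) ≤ N ∧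
      A ∩ closedBall x r ⊆ ⋃ c ∈ t, closedBall c r')
    {t : Finset X} (ht : ↑t ⊆ A) (hcov : A ⊆ ⋃ c ∈ t, closedBall c r) :
    ∃ t' : Finset X, ↑t' ⊆ A ∧ (t'.card : ℝ) ≤ t.card * N ∧
      A ⊆ ⋃ c ∈ t', closedBall c r' := by
  classical
  choose! s hsA hscard hscov using hstep
  refine ⟨t.biUnion s, ?_, ?_, ?_⟩
  · simpa [Set.subset_def] using fun y c hc hy => hsA c (ht hc) hy
  · calc ((t.biUnion s).card : ℝ) ≤ ∑ c ∈ t, ((s c).card : ℝ) := by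
          exact_mod_cast Finset.card_biUnion_le
      _ ≤ ∑ _c ∈ t, N := Finset.sum_le_sum fun c hc => hscard c (ht hc)
      _ = t.card * N := by rw [Finset.sum_const, nsmul_eq_mul]
  · intro y hy
    obtain ⟨c, hc, hyc⟩ := mem_iUnion₂.1 (hcov hy)
    obtain ⟨c', hc', hyc'⟩ := mem_iUnion₂.1 (hscov c (ht hc) ⟨hy, hyc⟩)
    exact mem_iUnion₂.2 ⟨c', Finset.mem_biUnion.2 ⟨c, hc, hc'⟩, hyc'⟩

end MetricCovers

theorem hausdorffMeasure_eq_zero_of_finset_covers {X : Type*} [MetricSpace X] [MeasurableSpace X]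
    [BorelSpace X] {A : Set X} {d : ℝ} (hd : 0 ≤ d) {r : ℕ → ℝ} (hr0 : ∀ m, 0 ≤ r m)
    (hr : Tendsto r atTop (𝓝 0)) {t : ℕ → Finset X}
    (hcov : ∀ m, A ⊆ ⋃ c ∈ t m, closedBall c (r m))
    (hsum : Tendsto (fun m => (t m).card * (2 * r m) ^ d) atTop (𝓝 0)) :
    μH[d] A = 0 := by
  have hdiam : ∀ m, ∀ c : t m, ediam (closedBall (c : X) (r m)) ≤ ENNReal.ofReal (2 * r m) :=
    fun m c => ediam_le_of_forall_dist_le fun x hx y hy => by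
      linarith [dist_triangle_right x y c, mem_closedBall.1 hx, mem_closedBall.1 hy]
  have hle := Measure.hausdorffMeasure_le_liminf_sum d A (fun m => ENNReal.ofReal (2 * r m))
    (by simpa using ENNReal.tendsto_ofReal (hr.const_mul 2))
    (fun m (c : t m) => closedBall (c : X) (r m)) (Eventually.of_forall hdiam)
    (Eventually.of_forall fun m y hy => by simpa using hcov m hy)
  have hsum_le : ∀ m, ∑ c : t m, ediam (closedBall (c : X) (r m)) ^ d ≤
      ENNReal.ofReal ((t m).card * (2 * r m) ^ d) := fun m =>
    calc ∑ c : t m, ediam (closedBall (c : X) (r m)) ^ d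
        ≤ ∑ _c : t m, ENNReal.ofReal ((2 * r m) ^ d) := Finset.sum_le_sum fun c _ => by
          rw [← ENNReal.ofReal_rpow_of_nonneg (by linarith [hr0 m]) hd]
          exact ENNReal.rpow_le_rpow (hdiam m c) hd
      _ = ENNReal.ofReal ((t m).card * (2 * r m) ^ d) := by
          rw [Finset.sum_const, Finset.card_univ, Fintype.card_coe, nsmul_eq_mul,
            ENNReal.ofReal_mul (Nat.cast_nonneg _), ENNReal.ofReal_natCast]
  have hlim := (ENNReal.tendsto_ofReal hsum).liminf_eq
  rw [ENNReal.ofReal_zero] at hlim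
  exact le_antisymm (hle.trans ((liminf_le_liminf (Eventually.of_forall hsum_le)).trans_eq hlim))
    zero_le

section Flatness

variable {E : Type*} [NormedAddCommGroup E] [NormedSpace ℝ E]

def IsFlatAt (ℓ : ℕ) (ε ρ : ℝ) (A : Set E) (x : E) : Prop :=
  ∃ W : Submodule ℝ E, finrank ℝ W ≤ ℓ ∧ ∀ y ∈ A, dist y x ≤ ρ → infDist (y - x) W ≤ ε * ρ

variable {ℓ : ℕ} {ε ρ ρ₀ : ℝ} {A B : Set E} {x : E}

theorem IsFlatAt.mono (h : IsFlatAt ℓ ε ρ B x) (hAB : A ⊆ B) : IsFlatAt ℓ ε ρ A x :=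
  let ⟨W, hW, hWB⟩ := h
  ⟨W, hW, fun y hy => hWB y (hAB hy)⟩

variable [FiniteDimensional ℝ E]

theorem Submodule.exists_finset_cover (W : Submodule ℝ E) (hW : finrank ℝ W ≤ ℓ) {R δ : ℝ}
    (hR : 0 ≤ R) (hδ : 0 < δ) :
    ∃ t : Finset E, (t.card : ℝ) ≤ (2 * R / δ + 1) ^ ℓ ∧
      ∀ v ∈ W, ‖v‖ ≤ R → ∃ c ∈ t, dist v c ≤ δ := by
  classical
  obtain ⟨t, htcard, htcov⟩ := exists_finset_cover_closedBall (V := W) hR hδ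
  refine ⟨t.image Subtype.val, ?_, fun v hv hvR => ?_⟩
  · calc ((t.image Subtype.val).card : ℝ) ≤ t.card := by exact_mod_cast Finset.card_image_le
      _ ≤ (2 * R / δ + 1) ^ finrank ℝ W := htcard
      _ ≤ (2 * R / δ + 1) ^ ℓ := pow_le_pow_right₀ (le_add_of_nonneg_left (by positivity)) hW
  · obtain ⟨c, hc, hvc⟩ := mem_iUnion₂.1 (htcov (a := ⟨v, hv⟩) (mem_closedBall_zero_iff.2 hvR))
    exact ⟨c, Finset.mem_image_of_mem _ hc, hvc⟩

theorem IsFlatAt.exists_finset_cover (h : IsFlatAt ℓ ε ρ A x) (hε : 0 < ε) (hε2 : ε ≤ 1 / 2)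
    (hρ : 0 < ρ) :
    ∃ t : Finset E, (t.card : ℝ) ≤ (4 / ε + 1) ^ ℓ ∧
      A ∩ closedBall x ρ ⊆ ⋃ c ∈ t, closedBall c (3 * ε * ρ) := by
  classical
  obtain ⟨W, hW, hWA⟩ := h
  obtain ⟨t, htcard, htcov⟩ :=
    W.exists_finset_cover hW (R := 2 * ρ) (δ := ε * ρ) (by positivity) (by positivity)
  refine ⟨t.image (x + ·), ?_, fun y ⟨hyA, hyx⟩ => ?_⟩
  · calc ((t.image (x + ·)).card : ℝ) ≤ t.card := by exact_mod_cast Finset.card_image_le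
      _ ≤ (4 / ε + 1) ^ ℓ := htcard.trans_eq (by congr 2; field_simp; ring)
  rw [mem_closedBall] at hyx
  obtain ⟨v, hv, hyv⟩ := (infDist_lt_iff ⟨0, W.zero_mem⟩).1
    ((hWA y hyA hyx).trans_lt (by nlinarith : ε * ρ < 2 * ε * ρ))
  have hvR : ‖v‖ ≤ 2 * ρ := by
    have := norm_le_insert' v (y - x)
    rw [← dist_eq_norm y x, ← dist_eq_norm v (y - x), dist_comm v] at this
    nlinarith
  obtain ⟨c, hc, hvc⟩ := htcov v hv hvR
  refine mem_iUnion₂.2 ⟨x + c, Finset.mem_image_of_mem _ hc, mem_closedBall.2 ?_⟩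
  calc dist y (x + c) = dist (y - x) c := by rw [dist_eq_norm, dist_eq_norm, sub_sub]
    _ ≤ dist (y - x) v + dist v c := dist_triangle _ _ _
    _ ≤ 3 * ε * ρ := by linarith

theorem exists_finset_cover_of_isFlatAt (hA : Bornology.IsBounded A) (hε : 0 < ε)
    (hε6 : ε ≤ 1 / 6) (hρ₀ : 0 < ρ₀)
    (hflat : ∀ x ∈ A, ∀ ρ, 0 < ρ → ρ ≤ ρ₀ → IsFlatAt ℓ ε ρ A x) :
    ∃ M : ℕ, ∀ m : ℕ, ∃ t : Finset E, ↑t ⊆ A ∧ (t.card : ℝ) ≤ M * ((4 / ε + 1) ^ ℓ) ^ m ∧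
      A ⊆ ⋃ c ∈ t, closedBall c ((6 * ε) ^ m * ρ₀) := by
  obtain ⟨s, hsA, hsfin, hscov⟩ := finite_approx_of_totallyBounded
    (hA.isCompact_closure.totallyBounded.subset subset_closure) ρ₀ hρ₀
  refine ⟨hsfin.toFinset.card, fun m => ?_⟩
  induction m with
  | zero =>
    refine ⟨hsfin.toFinset, by simpa using hsA, by simp, ?_⟩
    simpa using hscov.trans (iUnion₂_mono fun _ _ => ball_subset_closedBall)
  | succ m ih =>
    obtain ⟨t, htA, htcard, htcov⟩ := ih
    have hρ : 0 < (6 * ε) ^ m * ρ₀ := by positivity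
    have hρle : (6 * ε) ^ m * ρ₀ ≤ ρ₀ :=
      mul_le_of_le_one_left hρ₀.le (pow_le_one₀ (by positivity) (by linarith))
    have hradius : 2 * (3 * ε * ((6 * ε) ^ m * ρ₀)) = (6 * ε) ^ (m + 1) * ρ₀ := by ring
    have hstep : ∀ x ∈ A, ∃ t : Finset E, ↑t ⊆ A ∧ (t.card : ℝ) ≤ (4 / ε + 1) ^ ℓ ∧
        A ∩ closedBall x ((6 * ε) ^ m * ρ₀) ⊆
          ⋃ c ∈ t, closedBall c ((6 * ε) ^ (m + 1) * ρ₀) := by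
      intro x hx
      obtain ⟨t₀, ht₀card, ht₀cov⟩ :=
        (hflat x hx _ hρ hρle).exists_finset_cover hε (by linarith) hρ
      obtain ⟨t₁, ht₁A, ht₁card, ht₁cov⟩ := exists_finset_subset_cover_two_mul ht₀cov
      exact ⟨t₁, ht₁A.trans inter_subset_left, (Nat.cast_le.2 ht₁card).trans ht₀card,
        hradius ▸ ht₁cov⟩
    obtain ⟨t', ht'A, ht'card, ht'cov⟩ := exists_finset_cover_refine hstep htA htcov
    refine ⟨t', ht'A, ht'card.trans ?_, ht'cov⟩
    rw [pow_succ, ← mul_assoc]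
    exact mul_le_mul_of_nonneg_right htcard (by positivity)

theorem hausdorffMeasure_eq_zero_of_isFlatAt [MeasurableSpace E] [BorelSpace E]
    (hA : Bornology.IsBounded A) (hε : 0 < ε) (hε6 : ε < 1 / 6) (hρ₀ : 0 < ρ₀)
    (hflat : ∀ x ∈ A, ∀ ρ, 0 < ρ → ρ ≤ ρ₀ → IsFlatAt ℓ ε ρ A x) {d : ℝ} (hd : 0 ≤ d)
    (hq : (4 / ε + 1) ^ ℓ * (6 * ε) ^ d < 1) :
    μH[d] A = 0 := by
  obtain ⟨M, hM⟩ := exists_finset_cover_of_isFlatAt hA hε hε6.le hρ₀ hflat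
  choose t _ htcard htcov using hM
  have h6ε : 6 * ε < 1 := by linarith
  refine hausdorffMeasure_eq_zero_of_finset_covers hd (fun m => by positivity)
    (by simpa using (tendsto_pow_atTop_nhds_zero_of_lt_one (by positivity) h6ε).mul_const ρ₀)
    htcov ?_
  have hgeom := (tendsto_pow_atTop_nhds_zero_of_lt_one (by positivity) hq).const_mul
    ((M : ℝ) * (2 * ρ₀) ^ d)
  rw [mul_zero] at hgeom
  refine squeeze_zero (fun m => by positivity) (fun m => ?_) hgeom
  calc (t m).card * (2 * ((6 * ε) ^ m * ρ₀)) ^ d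
      ≤ M * ((4 / ε + 1) ^ ℓ) ^ m * (2 * ((6 * ε) ^ m * ρ₀)) ^ d := by gcongr; exact htcard m
    _ = M * (2 * ρ₀) ^ d * ((4 / ε + 1) ^ ℓ * (6 * ε) ^ d) ^ m := by
      rw [show 2 * ((6 * ε) ^ m * ρ₀) = 2 * ρ₀ * (6 * ε) ^ m by ring,
        Real.mul_rpow (by positivity) (by positivity), ← Real.rpow_pow_comm (by positivity)]
      ring

end Flatness

theorem exists_flatness_constant (ℓ : ℕ) {d : ℝ} (hd : ℓ < d) :
    ∃ ε : ℝ, 0 < ε ∧ ε < 1 / 6 ∧ (4 / ε + 1) ^ ℓ * (6 * ε) ^ d < 1 := by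
  have hcont : ContinuousAt (fun ε : ℝ => (4 + ε) ^ ℓ * 6 ^ d * ε ^ (d - ℓ)) 0 :=
    ((continuousAt_const.add continuousAt_id).pow ℓ).mul continuousAt_const |>.mul
      (Real.continuousAt_rpow_const 0 _ (Or.inr (sub_pos.2 hd).le))
  have hlim : Tendsto (fun ε : ℝ => (4 + ε) ^ ℓ * 6 ^ d * ε ^ (d - ℓ)) (𝓝[>] 0) (𝓝 0) := by
    simpa [Real.zero_rpow (sub_pos.2 hd).ne'] using hcont.tendsto.mono_left nhdsWithin_le_nhds
  obtain ⟨ε, hlt, hε⟩ := ((hlim.eventually (gt_mem_nhds one_pos)).and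
    (Ioo_mem_nhdsGT (by norm_num : (0 : ℝ) < 1 / 6))).exists
  refine ⟨ε, hε.1, hε.2, lt_of_eq_of_lt ?_ hlt⟩
  rw [Real.mul_rpow (by norm_num) hε.1.le, Real.rpow_sub hε.1, Real.rpow_natCast]
  field_simp
  rw [div_add_one hε.1.ne', div_pow]
  ring

theorem tendsto_extend_atTop {α : Type*} [TopologicalSpace α] {σ : ℕ → ℕ} (hσ : StrictMono σ)
    {u : ℕ → α} {a : α} (hu : Tendsto u atTop (𝓝 a)) :
    Tendsto (Function.extend σ u fun _ => a) atTop (𝓝 a) := by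
  refine tendsto_def.2 fun s hs => ?_
  obtain ⟨K, hK⟩ := eventually_atTop.1 (hu hs)
  refine eventually_atTop.2 ⟨σ K, fun j hj => ?_⟩
  by_cases h : ∃ k, σ k = j
  · obtain ⟨k, rfl⟩ := h
    rw [hσ.injective.extend_apply]
    exact hK k (hσ.le_iff_le.1 hj)
  · rw [Function.extend_apply' _ _ _ h]
    exact mem_of_mem_nhds hs

theorem exists_strictAnti_subseq {u : ℕ → ℝ} (hpos : ∀ i, 0 < u i)
    (hu : Tendsto u atTop (𝓝 0)) : ∃ φ : ℕ → ℕ, StrictMono φ ∧ StrictAnti (u ∘ φ) := by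
  obtain ⟨φ, hφ, hinv⟩ := strictMono_subseq_of_tendsto_atTop (u := fun i => (u i)⁻¹)
    (tendsto_inv_nhdsGT_zero.comp (tendsto_nhdsWithin_iff.2 ⟨hu, Eventually.of_forall hpos⟩))
  exact ⟨φ, hφ, fun i j hij => (inv_lt_inv₀ (hpos _) (hpos _)).1 (hinv hij)⟩

section WhiteStratum

variable {n : ℕ}

local notation "E" => EuclideanSpace ℝ (Fin n)

theorem IsConical.apply_le_apply_zero {g : E → ℝ} (hg : IsConical g) (y : E) : g y ≤ g 0 := by
  by_contra! h
  have hsmall : ∀ᶠ t in 𝓝[>] (0 : ℝ), g (t • y) < g y := by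
    refine (tendsto_nhdsWithin_of_tendsto_nhds ?_).eventually (hg.1 0 (g y) h)
    simpa using (tendsto_id (x := 𝓝 (0 : ℝ))).smul_const y
  obtain ⟨t, hty, ht⟩ := (hsmall.and self_mem_nhdsWithin).exists
  have := hg.2.2 0 rfl y t ht
  rw [zero_add, zero_add] at this
  exact hty.ne this

theorem IsConical.mem_spine_of_le {g : E → ℝ} (hg : IsConical g) {y : E} (h : g 0 ≤ g y) :
    y ∈ spine g :=
  le_antisymm (hg.apply_le_apply_zero y) h

theorem exists_subseq_tendsto_mem_spine {f g : E → ℝ} {x : E} {s : ℕ → ℝ} {z : ℕ → E}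
    (hf : UpperSemicontinuousAt f x) (hg : IsConical g) (hg0 : g 0 = f x)
    (hs : Tendsto s atTop (𝓝 0))
    (hblow : ∀ y ∈ ball (0 : E) 1, ∀ ys : ℕ → E, (∀ j, ys j ∈ ball (0 : E) 1) →
      Tendsto ys atTop (𝓝 y) → limsup (fun j => f (x + s j • ys j)) atTop ≤ g y)
    (hz : ∀ j, z j ∈ closedBall (0 : E) (1 / 2))
    (hfz : ∀ η > 0, ∀ᶠ j in atTop, f x - η ≤ f (x + s j • z j)) :
    ∃ w ∈ spine g, ∃ σ : ℕ → ℕ, StrictMono σ ∧ Tendsto (z ∘ σ) atTop (𝓝 w) := by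
  obtain ⟨w, hw, σ, hσ, hzσ⟩ := (isCompact_closedBall (0 : E) (1 / 2)).tendsto_subseq hz
  refine ⟨w, hg.mem_spine_of_le ?_, σ, hσ, hzσ⟩
  -- `z` is only known to converge along `σ`; off `σ` the test sequence is frozen at `w`.
  set ys : ℕ → E := Function.extend σ (z ∘ σ) fun _ => w
  have hys_σ : ∀ k, ys (σ k) = z (σ k) := fun k => hσ.injective.extend_apply _ _ k
  have hys : ∀ j, ys j ∈ closedBall (0 : E) (1 / 2) := fun j => by
    by_cases h : ∃ k, σ k = j
    · obtain ⟨k, rfl⟩ := h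
      exact hys_σ k ▸ hz (σ k)
    · rwa [show ys j = w from Function.extend_apply' _ _ _ h]
  have hys_lim : Tendsto ys atTop (𝓝 w) := tendsto_extend_atTop hσ hzσ
  have hball : closedBall (0 : E) (1 / 2) ⊆ ball 0 1 := closedBall_subset_ball (by norm_num)
  have hbdd : IsBoundedUnder (· ≤ ·) atTop fun j => f (x + s j • ys j) := by
    have hx : Tendsto (fun j => x + s j • ys j) atTop (𝓝 x) := by
      simpa using tendsto_const_nhds.add (hs.smul hys_lim)
    exact ⟨f x + 1, eventually_map.2 ((hx.eventually (hf _ (lt_add_one _))).mono fun _ h => h.le)⟩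
  rw [hg0]
  refine le_of_forall_sub_le fun η hη => (le_limsup_of_frequently_le ?_ hbdd).trans
    (hblow w (hball hw) ys (fun j => hball (hys j)) hys_lim)
  exact hσ.tendsto_atTop.frequently_map _ (fun k hk => hys_σ k ▸ hk)
    (hσ.tendsto_atTop.eventually (hfz η hη)).frequently

theorem exists_flat_scale_of_blowup {f g : E → ℝ} {x : E} {r δ : ℕ → ℝ}
    (hf : UpperSemicontinuousAt f x) (hg : IsConical g) (hg0 : g 0 = f x)
    (hr : ∀ j, 0 < r j) (hr0 : Tendsto r atTop (𝓝 0)) (hδ : Tendsto δ atTop (𝓝 0))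
    (hblow : ∀ y ∈ ball (0 : E) 1, ∀ ys : ℕ → E, (∀ j, ys j ∈ ball (0 : E) 1) →
      Tendsto ys atTop (𝓝 y) → limsup (fun j => f (x + (2 * r j) • ys j)) atTop ≤ g y)
    {ε : ℝ} (hε : 0 < ε) :
    ∃ j, ∀ y, f x - δ j ≤ f y → dist y x ≤ r j →
      infDist (y - x) (Submodule.span ℝ (spine g)) ≤ ε * r j := by
  set W := Submodule.span ℝ (spine g)
  by_contra! H
  choose y hyf hyx hyW using H
  set z : ℕ → E := fun j => (2 * r j)⁻¹ • (y j - x)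
  have hyz : ∀ j, y j - x = (2 * r j) • z j := fun j =>
    (smul_inv_smul₀ (mul_pos two_pos (hr j)).ne' _).symm
  have hz : ∀ j, z j ∈ closedBall (0 : E) (1 / 2) := fun j => by
    have := hr j
    rw [mem_closedBall_zero_iff, norm_smul, Real.norm_of_nonneg (by positivity), ← dist_eq_norm]
    calc (2 * r j)⁻¹ * dist (y j) x ≤ (2 * r j)⁻¹ * r j := by gcongr; exact hyx j
      _ = 1 / 2 := by field_simp
  have hfz : ∀ η > 0, ∀ᶠ j in atTop, f x - η ≤ f (x + (2 * r j) • z j) := fun η hη => by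
    filter_upwards [hδ.eventually (ge_mem_nhds hη)] with j hj
    rw [← hyz, add_sub_cancel]
    linarith [hyf j]
  obtain ⟨w, hw, σ, -, hzw⟩ := exists_subseq_tendsto_mem_spine hf hg hg0
    (by simpa using hr0.const_mul 2) hblow hz hfz
  have hfar : ∀ j, ε / 2 < dist (z j) w := fun j => by
    have hW : (2 * r j) • w ∈ W := W.smul_mem _ (Submodule.subset_span hw)
    have := (hyW j).trans_le (infDist_le_dist_of_mem hW)
    rw [hyz, dist_smul₀, Real.norm_of_nonneg (mul_pos two_pos (hr j)).le] at this
    nlinarith [hr j]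
  obtain ⟨k, hk⟩ := (hzw.eventually (ball_mem_nhds w (half_pos hε))).exists
  exact (hfar (σ k)).not_gt hk

theorem exists_isFlatAt_of_mem_whiteStratum {Ω : Set E} (hΩo : IsOpen Ω) {f : E → ℝ}
    (hf : UpperSemicontinuousOn f Ω) {G : E → Set (E → ℝ)}
    (hG_conical : ∀ x ∈ Ω, ∀ g ∈ G x, IsConical g) (hI' : ∀ x ∈ Ω, ∀ g ∈ G x, g 0 = f x)
    (hII' : WhiteHypII Ω f G) {ℓ : ℕ} {x : E} (hx : x ∈ whiteStratum Ω f G ℓ) {ε : ℝ}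
    (hε : 0 < ε) :
    ∃ η > 0, ∀ ρ, 0 < ρ → ρ ≤ η → IsFlatAt ℓ ε ρ {y | f x - η ≤ f y} x := by
  obtain ⟨hxΩ, -, hdim⟩ := hx
  by_contra! H
  choose ρ hρ0 hρη hbad using fun i : ℕ => H (1 / (i + 1)) Nat.one_div_pos_of_nat
  have hρ : Tendsto ρ atTop (𝓝 0) :=
    squeeze_zero (fun i => (hρ0 i).le) hρη tendsto_one_div_add_atTop_nhds_zero_nat
  obtain ⟨ψ, hψ, hanti⟩ := exists_strictAnti_subseq hρ0 hρ
  obtain ⟨φ, hφ, g, hgG, hblow⟩ := hII' x hxΩ (fun j => 2 * ρ (ψ j)) (fun j => by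
    have := hρ0 (ψ j); positivity) (fun i j hij => by simpa using hanti hij)
    (by simpa using (hρ.comp hψ.tendsto_atTop).const_mul 2)
  have hfx : UpperSemicontinuousAt f x := fun c hc => by
    simpa [hΩo.nhdsWithin_eq hxΩ] using hf x hxΩ c hc
  obtain ⟨j, hj⟩ := exists_flat_scale_of_blowup (r := fun j => ρ (ψ (φ j)))
    (δ := fun j => 1 / ((ψ (φ j) : ℝ) + 1)) hfx (hG_conical x hxΩ g hgG) (hI' x hxΩ g hgG)
    (fun j => hρ0 _) (hρ.comp (hψ.comp hφ).tendsto_atTop)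
    (tendsto_one_div_add_atTop_nhds_zero_nat.comp (hψ.comp hφ).tendsto_atTop) hblow hε
  exact hbad (ψ (φ j)) ⟨_, hdim g hgG, fun y hy hyx => hj y hy hyx⟩

theorem hausdorffMeasure_whiteStratum_eq_zero {Ω : Set E} (hΩo : IsOpen Ω)
    (hΩb : Bornology.IsBounded Ω) {f : E → ℝ} (hf : UpperSemicontinuousOn f Ω)
    {G : E → Set (E → ℝ)} (hG_conical : ∀ x ∈ Ω, ∀ g ∈ G x, IsConical g)
    (hI' : ∀ x ∈ Ω, ∀ g ∈ G x, g 0 = f x) (hII' : WhiteHypII Ω f G) {ℓ : ℕ} {d : ℝ}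
    (hd : ℓ < d) :
    μH[d] (whiteStratum Ω f G ℓ) = 0 := by
  obtain ⟨ε, hε, hε6, hq⟩ := exists_flatness_constant ℓ hd
  let T : ℕ → ℚ → Set E := fun k q => {x ∈ whiteStratum Ω f G ℓ | q ≤ f x ∧ f x < q + 1 / (k + 1) ∧
    ∀ ρ : ℝ, 0 < ρ → ρ ≤ 1 / (k + 1) → IsFlatAt ℓ ε ρ {y | f x - 1 / (k + 1) ≤ f y} x}
  have hcover : whiteStratum Ω f G ℓ ⊆ ⋃ (k : ℕ) (q : ℚ), T k q := fun x hx => by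
    obtain ⟨η, hη, hflat⟩ := exists_isFlatAt_of_mem_whiteStratum hΩo hf hG_conical hI' hII' hx hε
    obtain ⟨k, hk⟩ := exists_nat_one_div_lt hη
    obtain ⟨q, hqx, hxq⟩ := exists_rat_btwn (sub_lt_self (f x) (Nat.one_div_pos_of_nat (n := k)))
    refine mem_iUnion₂.2 ⟨k, q, hx, hxq.le, by linarith, fun ρ hρ hρk => ?_⟩
    exact (hflat ρ hρ (hρk.trans hk.le)).mono fun y (hy : f x - 1 / (k + 1) ≤ f y) =>
      show f x - η ≤ f y by linarith
  have hnull : ∀ k q, μH[d] (T k q) = 0 := fun k q =>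
    hausdorffMeasure_eq_zero_of_isFlatAt (hΩb.subset fun x hx => hx.1.1) hε hε6
      Nat.one_div_pos_of_nat (fun x hx ρ hρ hρk => (hx.2.2.2 ρ hρ hρk).mono fun y hy =>
        show f x - 1 / (k + 1) ≤ f y by linarith [hy.2.1, hx.2.2.1])
      ((Nat.cast_nonneg ℓ).trans hd.le) hq
  exact measure_mono_null hcover (measure_iUnion_null fun k => measure_iUnion_null (hnull k))

end WhiteStratum

theorem white_stratification_dimension_general {n : ℕ} (Ω : Set (EuclideanSpace ℝ (Fin n)))
    (hΩo : IsOpen Ω) (hΩb : Bornology.IsBounded Ω)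
    (f : EuclideanSpace ℝ (Fin n) → ℝ)
    (hf_usc : UpperSemicontinuousOn f Ω)
    (G : EuclideanSpace ℝ (Fin n) → Set (EuclideanSpace ℝ (Fin n) → ℝ))
    (hG_conical : ∀ x ∈ Ω, ∀ g ∈ G x, IsConical g)
    (hI' : ∀ x ∈ Ω, ∀ g ∈ G x, g 0 = f x)
    (hII' : WhiteHypII Ω f G) :
    ∀ ℓ : ℕ, 1 ≤ ℓ → ℓ ≤ n → dimH (whiteStratum Ω f G ℓ) ≤ (ℓ : ENNReal) := by
  intro ℓ _ _
  refine dimH_le fun d hd => le_of_not_gt fun hℓd => ENNReal.top_ne_zero ?_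
  rw [← hd]
  exact hausdorffMeasure_whiteStratum_eq_zero hΩo hΩb hf_usc hG_conical hI' hII'
    (by exact_mod_cast hℓd)

/-- White's stratification theorem, dimension part: under the Structural Hypotheses
(i') and (ii'), `dim_H(Σ_ℓ) ≤ ℓ` for every `ℓ ∈ {1,…,n}`. -/
theorem white_stratification_dimension {n : ℕ} (Ω : Set (EuclideanSpace ℝ (Fin n)))
    (hΩo : IsOpen Ω) (hΩb : Bornology.IsBounded Ω)
    (f : EuclideanSpace ℝ (Fin n) → ℝ)
    (hf_usc : UpperSemicontinuousOn f Ω) (hf_nonneg : ∀ x ∈ Ω, 0 ≤ f x)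
    (G : EuclideanSpace ℝ (Fin n) → Set (EuclideanSpace ℝ (Fin n) → ℝ))
    (hG_conical : ∀ x ∈ Ω, ∀ g ∈ G x, IsConical g)
    (hG_compact : ∀ x ∈ Ω, IsCompactClass (G x))
    (hI' : ∀ x ∈ Ω, ∀ g ∈ G x, g 0 = f x)
    (hII' : WhiteHypII Ω f G) :
    ∀ ℓ : ℕ, 1 ≤ ℓ → ℓ ≤ n → dimH (whiteStratum Ω f G ℓ) ≤ (ℓ : ENNReal) :=
  white_stratification_dimension_general Ω hΩo hΩb f hf_usc G hG_conical hI' hII'
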